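/- arXiv:1610.04523 — 2 statements merged into one kernel-verified Lean document; each statement's English description precedes it below -/
import Mathlib

section
/- Let Φ be a minimal unsatisfiable 2CNF formula. If Φ has a disjunctive splitting over some variable x, then Φ has a complete disjunctive splitting tree, i.e., a splitting tree in which every splitting used is disjunctive and every leaf is a formula containing at most one variable. -/
/-! Basic definitions: literals, clauses, CNF formulas. -/

/-- A literal is a variable together with a polarity. -/
abbrev Lit (V : Type) : Type := V × Bool

/-- Negation of a literal. -/
def Lit.neg {V : Type} (l : Lit V) : Lit V := (l.1, !l.2)

/-- A clause is a finite set of literals (a disjunction). -/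
abbrev Clause (V : Type) : Type := Finset (Lit V)

/-- A CNF formula is a finite set of clauses (a conjunction). -/
abbrev CNF (V : Type) : Type := Finset (Clause V)

section BasicDefs

variable {V : Type} [DecidableEq V]

/-- A literal holds under a Boolean assignment. -/
def Lit.holds (a : V → Bool) (l : Lit V) : Prop := a l.1 = l.2

/-- A clause holds under an assignment if some literal in it holds. -/
def Clause.holds (a : V → Bool) (C : Clause V) : Prop := ∃ l ∈ C, Lit.holds a l

/-- A CNF formula is satisfiable. -/
def CNF.sat (Φ : CNF V) : Prop := ∃ a : V → Bool, ∀ C ∈ Φ, Clause.holds a C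

/-- A CNF formula is unsatisfiable. -/
def CNF.unsat (Φ : CNF V) : Prop := ¬ CNF.sat Φ

/-- A CNF formula is minimal unsatisfiable: it is unsatisfiable and every
proper subformula is satisfiable. -/
def CNF.minUnsat (Φ : CNF V) : Prop :=
  CNF.unsat Φ ∧ ∀ Ψ : CNF V, Ψ ⊂ Φ → CNF.sat Ψ

/-- The set of variables occurring in a formula. -/
def CNF.vars (Φ : CNF V) : Finset V := Φ.biUnion (fun C => C.image Prod.fst)

/-- The deficiency of a formula: number of clauses minus number of variables. -/
def CNF.deficiency (Φ : CNF V) : ℤ := (Φ.card : ℤ) - ((CNF.vars Φ).card : ℤ)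

/-- MU(1): minimal unsatisfiable with deficiency 1. -/
def CNF.MU1 (Φ : CNF V) : Prop := CNF.minUnsat Φ ∧ CNF.deficiency Φ = 1

/-- A 2CNF formula: every clause has at most 2 literals. -/
def CNF.is2CNF (Φ : CNF V) : Prop := ∀ C ∈ Φ, C.card ≤ 2

/-- `R` is the resolvent of `C1` and `C2` upon the matching variable `x`. -/
def IsResolvent (C1 C2 R : Clause V) (x : V) : Prop :=
  (x, true) ∈ C1 ∧ (x, false) ∈ C2 ∧
    R = (C1.erase (x, true)) ∪ (C2.erase (x, false))

/-- One step of read-once resolution on a multiset of clauses: the two parent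
clauses are removed from the current multiset and the resolvent is added. -/
def RORStep (S T : Multiset (Clause V)) : Prop :=
  ∃ (C1 C2 R : Clause V) (x : V),
    C1 ∈ S ∧ C2 ∈ S.erase C1 ∧ IsResolvent C1 C2 R x ∧
    T = R ::ₘ ((S.erase C1).erase C2)

/-- Read-once derivability of the clause `π` from the multiset of clauses `S`. -/
def RORDeriv (S : Multiset (Clause V)) (π : Clause V) : Prop :=
  ∃ T : Multiset (Clause V), Relation.ReflTransGen RORStep S T ∧ π ∈ T

/-- The formula `Φ` has a read-once resolution refutation. -/
def CNF.hasROR (Φ : CNF V) : Prop := RORDeriv (Φ.val) (∅ : Clause V)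

end BasicDefs

/-- A resolution step: two parent clauses, a matching variable and a resolvent. -/
structure RStep (V : Type) where
  c1 : Clause V
  c2 : Clause V
  mv : V
  res : Clause V

section MoreDefs

variable {V : Type} [DecidableEq V]

/-- Validity of a resolution step. -/
def RStep.valid (s : RStep V) : Prop := IsResolvent s.c1 s.c2 s.res s.mv

/-- A list of resolution steps is a resolution derivation from `Φ`: each step is a
valid resolution step whose parents are clauses of `Φ` or resolvents of earlier steps. -/
def IsResDeriv (Φ : CNF V) (L : List (RStep V)) : Prop :=
  ∀ (i : ℕ) (h : i < L.length),
    RStep.valid (L.get ⟨i, h⟩) ∧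
    ((L.get ⟨i, h⟩).c1 ∈ Φ ∨
      ∃ j, ∃ _ : j < i, (L.get ⟨j, by omega⟩).res = (L.get ⟨i, h⟩).c1) ∧
    ((L.get ⟨i, h⟩).c2 ∈ Φ ∨
      ∃ j, ∃ _ : j < i, (L.get ⟨j, by omega⟩).res = (L.get ⟨i, h⟩).c2)

/-- `Φ` has a Var-ROR refutation: a resolution refutation in which every variable
is used at most once as a matching variable. -/
def CNF.hasVarROR (Φ : CNF V) : Prop :=
  ∃ L : List (RStep V), IsResDeriv Φ L ∧ (L.map RStep.mv).Nodup ∧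
    ∃ s ∈ L, s.res = (∅ : Clause V)

/-- `(Fx, Fnx)` is a splitting of `Φ` over the variable `x`: `Fx` consists of all clauses
of `Φ` containing the literal `x` with that literal removed, together with some clauses of
`Φ` not containing `x` nor `¬x` (and symmetrically for `Fnx` with `¬x`), and both `Fx` and
`Fnx` are minimal unsatisfiable. -/
def IsSplitting (Φ : CNF V) (x : V) (Fx Fnx : CNF V) : Prop :=
  ∃ S1 S2 : CNF V,
    S1 ⊆ Φ ∧ S2 ⊆ Φ ∧
    (∀ C ∈ S1, (x, true) ∉ C ∧ (x, false) ∉ C) ∧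
    (∀ C ∈ S2, (x, true) ∉ C ∧ (x, false) ∉ C) ∧
    Fx = ((Φ.filter (fun C => (x, true) ∈ C)).image (fun C => C.erase (x, true))) ∪ S1 ∧
    Fnx = ((Φ.filter (fun C => (x, false) ∈ C)).image (fun C => C.erase (x, false))) ∪ S2 ∧
    CNF.minUnsat Fx ∧ CNF.minUnsat Fnx

/-- A disjunctive splitting: a splitting where `Fx` and `Fnx` have no clause `σ_i`
(clause of `Φ` mentioning neither `x` nor `¬x`) in common. -/
def IsDisjSplitting (Φ : CNF V) (x : V) (Fx Fnx : CNF V) : Prop :=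
  ∃ S1 S2 : CNF V,
    S1 ⊆ Φ ∧ S2 ⊆ Φ ∧ Disjoint S1 S2 ∧
    (∀ C ∈ S1, (x, true) ∉ C ∧ (x, false) ∉ C) ∧
    (∀ C ∈ S2, (x, true) ∉ C ∧ (x, false) ∉ C) ∧
    Fx = ((Φ.filter (fun C => (x, true) ∈ C)).image (fun C => C.erase (x, true))) ∪ S1 ∧
    Fnx = ((Φ.filter (fun C => (x, false) ∈ C)).image (fun C => C.erase (x, false))) ∪ S2 ∧
    CNF.minUnsat Fx ∧ CNF.minUnsat Fnx

end MoreDefs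

/-- `Φ` has a complete disjunctive splitting tree: a splitting tree all of whose
splittings are disjunctive and all of whose leaves contain at most one variable. -/
inductive HasCompleteDisjSplittingTree {V : Type} [DecidableEq V] : CNF V → Prop
  | leaf : ∀ Φ : CNF V, (CNF.vars Φ).card ≤ 1 → HasCompleteDisjSplittingTree Φ
  | node : ∀ (Φ Fx Fnx : CNF V) (x : V),
      IsDisjSplitting Φ x Fx Fnx →
      HasCompleteDisjSplittingTree Fx → HasCompleteDisjSplittingTree Fnx →
      HasCompleteDisjSplittingTree Φ


/-!
A splitting formula `F_x` of a 2CNF formula contains the clauses `π_i`, which have at most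
one literal. A minimal unsatisfiable 2CNF formula `Φ` with a unit clause `{l}` splits
disjunctively over the variable of `l`: the `l`-side is `{∅}`, because `{l}` is the only clause
containing `l`, and the other side is any minimal unsatisfiable subformula `G` of `Φ` with `l`
set to true. Minimality of `Φ` forces `G` to contain every shortened clause `π_i`, and `¬l`
occurs in `Φ`, so `G` again has a clause with at most one literal, while it has fewer variables
than `Φ`. Induction on the number of variables gives a complete disjunctive splitting tree below
`F_x` and `F_{¬x}`.
-/

section Formulas

variable {V : Type}

lemma Lit.eq_or_eq_neg_of_fst_eq {l l' : Lit V} (h : l'.1 = l.1) : l' = l ∨ l' = l.neg := by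
  obtain ⟨y, b⟩ := l
  obtain ⟨y', b'⟩ := l'
  obtain rfl : y' = y := h
  cases b <;> cases b' <;> simp [Lit.neg]

lemma Lit.holds_neg_iff (a : V → Bool) (l : Lit V) : Lit.holds a l.neg ↔ ¬ Lit.holds a l := by
  simp [Lit.holds, Lit.neg, Bool.eq_not_iff]

lemma Clause.fst_ne_of_not_mem {C : Clause V} {l l' : Lit V} (hl : l ∉ C) (hnl : l.neg ∉ C)
    (hl' : l' ∈ C) : l'.1 ≠ l.1 := fun h => by
  rcases Lit.eq_or_eq_neg_of_fst_eq h with rfl | rfl <;> contradiction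

lemma Clause.forall_fst_ne_iff {C : Clause V} {y : V} :
    (∀ l ∈ C, l.1 ≠ y) ↔ (y, true) ∉ C ∧ (y, false) ∉ C :=
  ⟨fun h => ⟨fun hm => h _ hm rfl, fun hm => h _ hm rfl⟩,
    fun h _ hl => Clause.fst_ne_of_not_mem (l := (y, true)) h.1 h.2 hl⟩

namespace CNF

lemma sat_empty : CNF.sat (∅ : CNF V) := ⟨fun _ => true, by simp⟩

lemma unsat_singleton_empty : CNF.unsat ({∅} : CNF V) := by
  rintro ⟨a, ha⟩
  obtain ⟨l, hl, -⟩ := ha ∅ (Finset.mem_singleton_self _)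
  simp at hl

lemma minUnsat_singleton_empty : CNF.minUnsat ({∅} : CNF V) :=
  ⟨unsat_singleton_empty, fun _ hΨ => (Finset.ssubset_singleton_iff.mp hΨ) ▸ sat_empty⟩

lemma unsat.exists_minUnsat_subset {Φ : CNF V} (h : CNF.unsat Φ) :
    ∃ Ψ ⊆ Φ, CNF.minUnsat Ψ := by
  induction Φ using Finset.strongInduction with
  | H Φ ih =>
    by_cases hmin : ∀ Ψ ⊂ Φ, CNF.sat Ψ
    · exact ⟨Φ, subset_rfl, h, hmin⟩
    push Not at hmin
    obtain ⟨Ψ, hΨ, hΨu⟩ := hmin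
    obtain ⟨Θ, hΘ, hΘmu⟩ := ih Ψ hΨ hΨu
    exact ⟨Θ, hΘ.trans hΨ.subset, hΘmu⟩

lemma is2CNF.mono {Φ Ψ : CNF V} (h : CNF.is2CNF Ψ) (hΦ : Φ ⊆ Ψ) : CNF.is2CNF Φ :=
  fun C hC => h C (hΦ hC)

end CNF

end Formulas

section Splitting

variable {V : Type} [DecidableEq V]

lemma Lit.holds_update_of_fst_ne {l : Lit V} {y : V} (h : l.1 ≠ y) (a : V → Bool) (v : Bool) :
    Lit.holds (Function.update a y v) l ↔ Lit.holds a l := by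
  simp [Lit.holds, Function.update_of_ne h]

namespace CNF

/-- The shortened clauses `π_i` of the splitting formula `F_l`. -/
def strip (Φ : CNF V) (l : Lit V) : CNF V :=
  (Φ.filter (fun C => l ∈ C)).image (fun C => C.erase l)

def avoiding (Φ : CNF V) (y : V) : CNF V := Φ.filter (fun C => ∀ l ∈ C, l.1 ≠ y)

@[simp]
lemma mem_strip {Φ : CNF V} {l : Lit V} {D : Clause V} :
    D ∈ strip Φ l ↔ ∃ C ∈ Φ, l ∈ C ∧ C.erase l = D := by
  simp [strip, and_assoc]

@[simp]
lemma mem_avoiding {Φ : CNF V} {y : V} {C : Clause V} :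
    C ∈ avoiding Φ y ↔ C ∈ Φ ∧ ∀ l ∈ C, l.1 ≠ y :=
  Finset.mem_filter

lemma erase_mem_strip {Φ : CNF V} {C : Clause V} {l : Lit V} (hC : C ∈ Φ) (hl : l ∈ C) :
    C.erase l ∈ strip Φ l :=
  mem_strip.mpr ⟨C, hC, hl, rfl⟩

@[simp]
lemma mem_vars {Φ : CNF V} {v : V} : v ∈ vars Φ ↔ ∃ C ∈ Φ, ∃ l ∈ C, l.1 = v := by
  simp [vars]

lemma vars_mono {Φ Ψ : CNF V} (h : Φ ⊆ Ψ) : vars Φ ⊆ vars Ψ :=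
  Finset.biUnion_subset_biUnion_of_subset_left _ h

/-- Setting the literal `l` to false turns `Φ` into `strip Φ l ∪ avoiding Φ l.1`. -/
lemma unsat.strip_union_avoiding {Φ : CNF V} (h : CNF.unsat Φ) (l : Lit V) :
    CNF.unsat (strip Φ l ∪ avoiding Φ l.1) := by
  rintro ⟨a, ha⟩
  refine h ⟨Function.update a l.1 (!l.2), fun C hC => ?_⟩
  by_cases hnl : l.neg ∈ C
  · exact ⟨l.neg, hnl, by simp [Lit.holds, Lit.neg]⟩
  by_cases hl : l ∈ C
  · obtain ⟨l', hl', hal'⟩ := ha _ (Finset.mem_union_left _ (erase_mem_strip hC hl))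
    have hne := Clause.fst_ne_of_not_mem (Finset.notMem_erase l C)
      (fun h => hnl (Finset.mem_of_mem_erase h)) hl'
    exact ⟨l', Finset.mem_of_mem_erase hl', (Lit.holds_update_of_fst_ne hne _ _).mpr hal'⟩
  · have hav : ∀ l' ∈ C, l'.1 ≠ l.1 := fun _ hl' => Clause.fst_ne_of_not_mem hl hnl hl'
    obtain ⟨l', hl', hal'⟩ := ha C (Finset.mem_union_right _ (mem_avoiding.mpr ⟨hC, hav⟩))
    exact ⟨l', hl', (Lit.holds_update_of_fst_ne (hav l' hl') _ _).mpr hal'⟩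

lemma minUnsat.eq_of_subset {Φ S : CNF V} (hmu : CNF.minUnsat Φ) (hS : S ⊆ Φ)
    (hSu : CNF.unsat S) : S = Φ := by
  by_contra hne
  exact hSu (hmu.2 S (Finset.ssubset_iff_subset_ne.mpr ⟨hS, hne⟩))

lemma minUnsat.exists_critical {Φ : CNF V} (hmu : CNF.minUnsat Φ) {C : Clause V}
    (hC : C ∈ Φ) :
    ∃ a, ¬ Clause.holds a C ∧ ∀ D ∈ Φ, D ≠ C → Clause.holds a D := by
  obtain ⟨a, ha⟩ := hmu.2 _ (Finset.erase_ssubset hC)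
  refine ⟨a, fun haC => hmu.1 ⟨a, fun D hD => ?_⟩,
    fun D hD hne => ha D (Finset.mem_erase.mpr ⟨hne, hD⟩)⟩
  by_cases h : D = C
  · exact h ▸ haC
  · exact ha D (Finset.mem_erase.mpr ⟨h, hD⟩)

lemma minUnsat.neg_not_mem {Φ : CNF V} (hmu : CNF.minUnsat Φ) {C : Clause V} (hC : C ∈ Φ)
    {l : Lit V} (hl : l ∈ C) : l.neg ∉ C := fun hnl => by
  obtain ⟨a, haC, -⟩ := hmu.exists_critical hC
  by_cases h : Lit.holds a l
  · exact haC ⟨l, hl, h⟩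
  · exact haC ⟨l.neg, hnl, (Lit.holds_neg_iff a l).mpr h⟩

lemma minUnsat.eq_of_mem_of_subset {Φ : CNF V} (hmu : CNF.minUnsat Φ) {C D : Clause V}
    (hC : C ∈ Φ) (hD : D ∈ Φ) (hCD : C ⊆ D) : C = D := by
  by_contra hne
  obtain ⟨a, haD, ha⟩ := hmu.exists_critical hD
  obtain ⟨l, hl, hal⟩ := ha C hC hne
  exact haD ⟨l, hCD hl, hal⟩

lemma minUnsat.eq_singleton_empty {Φ : CNF V} (hmu : CNF.minUnsat Φ) (h : ∅ ∈ Φ) :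
    Φ = {∅} :=
  (hmu.eq_of_subset (Finset.singleton_subset_iff.mpr h) unsat_singleton_empty).symm

lemma minUnsat.strip_of_unit {Φ : CNF V} (hmu : CNF.minUnsat Φ) {l : Lit V} (hu : {l} ∈ Φ) :
    strip Φ l = {∅} := by
  have hfilter : Φ.filter (fun C => l ∈ C) = {{l}} := by
    ext C
    simp only [Finset.mem_filter, Finset.mem_singleton]
    constructor
    · rintro ⟨hC, hlC⟩
      exact (hmu.eq_of_mem_of_subset hu hC (Finset.singleton_subset_iff.mpr hlC)).symm
    · rintro rfl
      exact ⟨hu, Finset.mem_singleton_self l⟩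
  simp [strip, hfilter]

lemma minUnsat.exists_neg_mem {Φ : CNF V} (hmu : CNF.minUnsat Φ) {C : Clause V} (hC : C ∈ Φ)
    {l : Lit V} (hl : l ∈ C) : ∃ D ∈ Φ, l.neg ∈ D := by
  by_contra! hpure
  obtain ⟨a, haC, ha⟩ := hmu.exists_critical hC
  refine hmu.1 ⟨Function.update a l.1 l.2, fun D hD => ?_⟩
  by_cases hDC : D = C
  · exact ⟨l, hDC ▸ hl, by simp [Lit.holds]⟩
  obtain ⟨l', hl', hal'⟩ := ha D hD hDC
  have hne : l'.1 ≠ l.1 := fun h => by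
    rcases Lit.eq_or_eq_neg_of_fst_eq h with rfl | rfl
    · exact haC ⟨l', hl, hal'⟩
    · exact hpure D hD hl'
  exact ⟨l', hl', (Lit.holds_update_of_fst_ne hne _ _).mpr hal'⟩

/-- The critical assignment of `C ∋ l` falsifies `l`, so without `C.erase l` it would
satisfy `G`. -/
lemma minUnsat.strip_subset_of_unsat {Φ : CNF V} (hmu : CNF.minUnsat Φ) {l : Lit V} {G : CNF V}
    (hG : G ⊆ strip Φ l ∪ avoiding Φ l.1) (hGu : CNF.unsat G) : strip Φ l ⊆ G := by
  intro D hD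
  obtain ⟨C, hC, hlC, rfl⟩ := mem_strip.mp hD
  by_contra hCG
  obtain ⟨a, haC, ha⟩ := hmu.exists_critical hC
  refine hGu ⟨a, fun E hE => ?_⟩
  rcases Finset.mem_union.mp (hG hE) with hs | hav
  · obtain ⟨C', hC', -, rfl⟩ := mem_strip.mp hs
    obtain ⟨l', hl', hal'⟩ := ha C' hC' (by rintro rfl; exact hCG hE)
    have hne : l' ≠ l := by rintro rfl; exact haC ⟨l', hlC, hal'⟩
    exact ⟨l', Finset.mem_erase.mpr ⟨hne, hl'⟩, hal'⟩
  · obtain ⟨hEΦ, hEav⟩ := mem_avoiding.mp hav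
    exact ha E hEΦ (by rintro rfl; exact hEav l hlC rfl)

lemma minUnsat.vars_strip_union_avoiding_subset {Φ : CNF V} (hmu : CNF.minUnsat Φ)
    (l : Lit V) : vars (strip Φ l ∪ avoiding Φ l.1) ⊆ (vars Φ).erase l.1 := by
  intro v hv
  obtain ⟨D, hD, l', hl', rfl⟩ := mem_vars.mp hv
  rcases Finset.mem_union.mp hD with hs | hav
  · obtain ⟨C, hC, hlC, rfl⟩ := mem_strip.mp hs
    have hnl : l.neg ∉ C.erase l := fun h =>
      hmu.neg_not_mem hC hlC (Finset.mem_of_mem_erase h)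
    exact Finset.mem_erase.mpr ⟨Clause.fst_ne_of_not_mem (Finset.notMem_erase l C) hnl hl',
      mem_vars.mpr ⟨C, hC, l', Finset.mem_of_mem_erase hl', rfl⟩⟩
  · obtain ⟨hDΦ, hDav⟩ := mem_avoiding.mp hav
    exact Finset.mem_erase.mpr ⟨hDav l' hl', mem_vars.mpr ⟨D, hDΦ, l', hl', rfl⟩⟩

lemma is2CNF.strip_union {Φ S : CNF V} (h : CNF.is2CNF Φ) (l : Lit V) (hS : S ⊆ Φ) :
    CNF.is2CNF (strip Φ l ∪ S) := by
  intro D hD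
  rcases Finset.mem_union.mp hD with hs | hS'
  · obtain ⟨C, hC, -, rfl⟩ := mem_strip.mp hs
    exact Finset.card_erase_le.trans (h C hC)
  · exact h D (hS hS')

lemma is2CNF.exists_short_mem_strip {Φ : CNF V} (h : CNF.is2CNF Φ) {C : Clause V} (hC : C ∈ Φ)
    {l : Lit V} (hl : l ∈ C) : ∃ D ∈ strip Φ l, D.card ≤ 1 := by
  refine ⟨C.erase l, erase_mem_strip hC hl, ?_⟩
  rw [Finset.card_erase_of_mem hl]
  have := h C hC
  omega

lemma minUnsat.exists_reduct_of_unit {Φ : CNF V} (h2 : CNF.is2CNF Φ) (hmu : CNF.minUnsat Φ)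
    {l : Lit V} (hu : {l} ∈ Φ) :
    ∃ G, CNF.minUnsat G ∧ strip Φ l.neg ⊆ G ∧ G ⊆ strip Φ l.neg ∪ avoiding Φ l.1 ∧
      CNF.is2CNF G ∧ (∃ D ∈ G, D.card ≤ 1) ∧ (vars G).card < (vars Φ).card := by
  obtain ⟨G, hGsub, hGmu⟩ := (hmu.1.strip_union_avoiding l.neg).exists_minUnsat_subset
  have hstrip := hmu.strip_subset_of_unsat hGsub hGmu.1
  obtain ⟨C, hC, hnlC⟩ := hmu.exists_neg_mem hu (Finset.mem_singleton_self l)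
  obtain ⟨D, hD, hDcard⟩ := h2.exists_short_mem_strip hC hnlC
  refine ⟨G, hGmu, hstrip, hGsub, (h2.strip_union l.neg (Finset.filter_subset _ _)).mono hGsub,
    ⟨D, hstrip hD, hDcard⟩, ?_⟩
  have hy : l.1 ∈ vars Φ := mem_vars.mpr ⟨{l}, hu, l, Finset.mem_singleton_self l, rfl⟩
  calc (vars G).card ≤ ((vars Φ).erase l.1).card :=
        Finset.card_le_card
          ((vars_mono hGsub).trans (hmu.vars_strip_union_avoiding_subset l.neg))
    _ < (vars Φ).card := Finset.card_erase_lt_of_mem hy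

end CNF

open CNF

lemma isDisjSplitting_of_subset {Φ Fx Fnx : CNF V} {x : V}
    (hx : strip Φ (x, true) ⊆ Fx) (hx' : Fx ⊆ strip Φ (x, true) ∪ avoiding Φ x)
    (hnx : strip Φ (x, false) ⊆ Fnx) (hnx' : Fnx ⊆ strip Φ (x, false) ∪ avoiding Φ x)
    (hdisj : Disjoint (Fx \ strip Φ (x, true)) (Fnx \ strip Φ (x, false)))
    (hmx : CNF.minUnsat Fx) (hmnx : CNF.minUnsat Fnx) : IsDisjSplitting Φ x Fx Fnx := by
  have h1 : Fx \ strip Φ (x, true) ⊆ avoiding Φ x := sdiff_le_iff.mpr hx'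
  have h2 : Fnx \ strip Φ (x, false) ⊆ avoiding Φ x := sdiff_le_iff.mpr hnx'
  exact ⟨_, _, h1.trans (Finset.filter_subset _ _), h2.trans (Finset.filter_subset _ _), hdisj,
    fun C hC => Clause.forall_fst_ne_iff.mp (mem_avoiding.mp (h1 hC)).2,
    fun C hC => Clause.forall_fst_ne_iff.mp (mem_avoiding.mp (h2 hC)).2,
    (Finset.union_sdiff_of_subset hx).symm, (Finset.union_sdiff_of_subset hnx).symm, hmx, hmnx⟩

theorem HasCompleteDisjSplittingTree.of_short_clause {Φ : CNF V} (h2 : CNF.is2CNF Φ)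
    (hmu : CNF.minUnsat Φ) (hshort : ∃ C ∈ Φ, C.card ≤ 1) :
    HasCompleteDisjSplittingTree Φ := by
  induction hn : (vars Φ).card using Nat.strong_induction_on generalizing Φ with
  | _ n ih =>
  by_cases hleaf : (vars Φ).card ≤ 1
  · exact .leaf Φ hleaf
  obtain ⟨C, hC, hCcard⟩ := hshort
  rcases Nat.le_one_iff_eq_zero_or_eq_one.mp hCcard with h0 | h1
  · rw [hmu.eq_singleton_empty (Finset.card_eq_zero.mp h0 ▸ hC)] at hleaf
    simp [vars] at hleaf
  obtain ⟨⟨y, b⟩, rfl⟩ := Finset.card_eq_one.mp h1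
  obtain ⟨G, hGmu, hGsub, hGsub', hG2, hGshort, hGvars⟩ := hmu.exists_reduct_of_unit h2 hC
  have hGtree := ih _ (hn ▸ hGvars) hG2 hGmu hGshort rfl
  have hunit := hmu.strip_of_unit hC
  have hbot : HasCompleteDisjSplittingTree ({∅} : CNF V) := .leaf _ (by simp [vars])
  have hunit' : {∅} ⊆ strip Φ (y, b) ∪ avoiding Φ y := hunit ▸ Finset.subset_union_left
  cases b
  · exact .node Φ G {∅} y (isDisjSplitting_of_subset hGsub hGsub' hunit.le hunit'
      (by simp [hunit]) hGmu minUnsat_singleton_empty) hGtree hbot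
  · exact .node Φ {∅} G y (isDisjSplitting_of_subset hunit.le hunit' hGsub hGsub'
      (by simp [hunit]) minUnsat_singleton_empty hGmu) hbot hGtree

lemma HasCompleteDisjSplittingTree.of_strip_union {Φ S : CNF V} (h2 : CNF.is2CNF Φ)
    {C : Clause V} (hC : C ∈ Φ) {l : Lit V} (hl : l ∈ C) (hS : S ⊆ Φ)
    (hmu : CNF.minUnsat (strip Φ l ∪ S)) :
    HasCompleteDisjSplittingTree (strip Φ l ∪ S) :=
  have ⟨D, hD, hDcard⟩ := h2.exists_short_mem_strip hC hl
  .of_short_clause (h2.strip_union l hS) hmu ⟨D, Finset.mem_union_left _ hD, hDcard⟩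

/-- Otherwise `x` does not occur in `Φ`, both sides of the splitting are `Φ` itself, and
disjointness forces `Φ = ∅`. -/
lemma IsDisjSplitting.exists_mem_pos {Φ Fx Fnx : CNF V} {x : V} (hmu : CNF.minUnsat Φ)
    (hsp : IsDisjSplitting Φ x Fx Fnx) : ∃ C ∈ Φ, (x, true) ∈ C := by
  obtain ⟨S1, S2, hS1, hS2, hdisj, -, -, rfl, rfl, hm1, hm2⟩ := hsp
  by_contra! hpos
  have hneg : ∀ C ∈ Φ, (x, false) ∉ C := fun C hC hxC =>
    have ⟨D, hD, hxD⟩ := hmu.exists_neg_mem hC hxC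
    hpos D hD hxD
  rw [Finset.filter_false_of_mem hpos, Finset.image_empty, Finset.empty_union] at hm1
  rw [Finset.filter_false_of_mem hneg, Finset.image_empty, Finset.empty_union] at hm2
  rw [hmu.eq_of_subset hS1 hm1.1, hmu.eq_of_subset hS2 hm2.1, disjoint_self,
    Finset.bot_eq_empty] at hdisj
  exact hmu.1 (hdisj ▸ sat_empty)

end Splitting

/-- A minimal unsatisfiable 2CNF formula with a disjunctive splitting
over some variable has a complete disjunctive splitting tree. -/
theorem stmt2 {V : Type} [DecidableEq V] (Φ : CNF V)
    (h2 : CNF.is2CNF Φ) (hmu : CNF.minUnsat Φ)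
    (h : ∃ (x : V) (Fx Fnx : CNF V), IsDisjSplitting Φ x Fx Fnx) :
    HasCompleteDisjSplittingTree Φ := by
  obtain ⟨x, Fx, Fnx, hsp⟩ := h
  obtain ⟨C, hC, hxC⟩ := hsp.exists_mem_pos hmu
  obtain ⟨D, hD, hxD⟩ := hmu.exists_neg_mem hC hxC
  obtain ⟨S1, S2, hS1, hS2, -, -, -, rfl, rfl, hm1, hm2⟩ := id hsp
  exact .node Φ _ _ x hsp (.of_strip_union h2 hC hxC hS1 hm1) (.of_strip_union h2 hD hxD hS2 hm2)
end

section
/- Let Φ be a 2CNF formula and x_i a variable. If the unit clause (x_i) can be derived from Φ by resolution, then (x_i) can be derived from Φ by a read-once resolution derivation, i.e., one using each clause of Φ in at most one resolution step. -/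
/-- General resolution derivability of a clause from a CNF formula. -/
inductive Derives {V : Type} [DecidableEq V] (Φ : CNF V) : Clause V → Prop
  | ax : ∀ C ∈ Φ, Derives Φ C
  | res : ∀ (C1 C2 R : Clause V) (x : V),
      Derives Φ C1 → Derives Φ C2 → IsResolvent C1 C2 R x → Derives Φ R

/-!
Read a 2-clause `{a, b}` as the two edges `¬a → b` and `¬b → a` of the implication graph.
Every clause derivable from a 2CNF formula is a clause `{l, m}` with at most two literals
admitting a walk `¬l → m`, so deriving `(x)` gives a walk `¬x → x`. Resolving along a walk
whose clauses are pairwise distinct uses each clause once and leaves a nonempty subclause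
of `{¬l, m}`. Otherwise look at the first repeated clause `c`. If the walk crosses `c` twice
in the same direction, it can be shortened. If it crosses `c` as `u → v` and later as
`¬v → ¬u`, the stretch `v → ¬v` between the crossings resolves to `(¬v)`, then `c` turns this
into `(¬u)`, and unit propagation back along the reversed initial segment `¬u → ¬l` gives
`(¬l)`, each step using clauses not used before.
-/

section ReadOnceResolution2CNF

theorem List.exists_eq_append_dup_of_not_nodup {α : Type*} {l : List α} (h : ¬l.Nodup) :
    ∃ (A B C : List α) (c : α), l = A ++ c :: B ++ c :: C ∧ (A ++ c :: B).Nodup := by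
  induction l using List.reverseRecOn with
  | nil => exact absurd List.nodup_nil h
  | append_singleton xs a ih =>
    by_cases hxs : xs.Nodup
    · have ha : a ∈ xs := by
        by_contra ha
        exact h (List.nodup_append.2 ⟨hxs, by simp, by grind⟩)
      obtain ⟨A, B, rfl⟩ := List.append_of_mem ha
      exact ⟨A, B, [], a, by simp, hxs⟩
    · obtain ⟨A, B, C, c, rfl, hnd⟩ := ih hxs
      exact ⟨A, B, C ++ [a], c, by simp, hnd⟩

theorem Finset.exists_eq_pair_of_card_le_two {α : Type*} [DecidableEq α] {s : Finset α}
    (hs : s.card ≤ 2) {t : α} (ht : t ∈ s) : ∃ a, s = {a, t} := by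
  rcases (s.erase t).eq_empty_or_nonempty with he | hne
  · exact ⟨t, by simpa [he] using (Finset.insert_erase ht).symm⟩
  · obtain ⟨a, ha⟩ : ∃ a, s.erase t = {a} := by
      rw [← Finset.card_eq_one]
      have := Finset.card_erase_of_mem ht
      have := hne.card_pos
      omega
    exact ⟨a, by rw [← Finset.insert_erase ht, ha, Finset.pair_comm]⟩

variable {V : Type}

@[simp] theorem Lit.neg_neg (l : Lit V) : l.neg.neg = l := by
  simp [Lit.neg]

theorem Lit.neg_ne_self (l : Lit V) : l.neg ≠ l := by
  simp [Lit.neg, Prod.ext_iff]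

variable [DecidableEq V]

theorem IsResolvent.card_add_two_le {C1 C2 R : Clause V} {x : V} (h : IsResolvent C1 C2 R x) :
    R.card + 2 ≤ C1.card + C2.card := by
  obtain ⟨h1, h2, rfl⟩ := h
  have := Finset.card_union_le (C1.erase (x, true)) (C2.erase (x, false))
  rw [Finset.card_erase_of_mem h1, Finset.card_erase_of_mem h2] at this
  have := Finset.card_pos.2 ⟨_, h1⟩
  have := Finset.card_pos.2 ⟨_, h2⟩
  omega

section ReadOnce

variable {S T U : Multiset (Clause V)} {C C1 C2 D : Clause V}

theorem RORStep.resolve {k : Lit V} (h1 : k ∈ C1) (h2 : k.neg ∈ C2) (S : Multiset (Clause V)) :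
    RORStep (C1 ::ₘ C2 ::ₘ S) ((C1.erase k ∪ C2.erase k.neg) ::ₘ S) := by
  obtain ⟨x, _ | _⟩ := k
  · refine ⟨C2, C1, _, x, by simp, ?_, ⟨h2, h1, rfl⟩, ?_⟩
    · simp [Multiset.cons_swap C1 C2]
    · rw [Multiset.cons_swap, Multiset.erase_cons_head, Multiset.erase_cons_head,
        Finset.union_comm]
      rfl
  · exact ⟨C1, C2, _, x, by simp, by simp, ⟨h1, h2, rfl⟩, by simp [Lit.neg]⟩

theorem RORStep.add_right (h : RORStep S T) (U : Multiset (Clause V)) :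
    RORStep (S + U) (T + U) := by
  obtain ⟨C1, C2, R, x, h1, h2, hres, rfl⟩ := h
  have e1 : (S + U).erase C1 = S.erase C1 + U := Multiset.erase_add_left_pos U h1
  refine ⟨C1, C2, R, x, Multiset.mem_add.2 (Or.inl h1), ?_, hres, ?_⟩
  · rw [e1]; exact Multiset.mem_add.2 (Or.inl h2)
  · rw [e1, Multiset.erase_add_left_pos U h2, Multiset.cons_add]

theorem RORStep.reflTransGen_add_right (h : Relation.ReflTransGen RORStep S T)
    (U : Multiset (Clause V)) : Relation.ReflTransGen RORStep (S + U) (T + U) :=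
  h.lift (· + U) fun _ _ h => h.add_right U

theorem RORDeriv.of_mem (h : C ∈ S) : RORDeriv S C :=
  ⟨S, .refl, h⟩

theorem RORDeriv.add_right (h : RORDeriv S C) (U : Multiset (Clause V)) :
    RORDeriv (S + U) C := by
  obtain ⟨T, hST, hC⟩ := h
  exact ⟨T + U, RORStep.reflTransGen_add_right hST U, Multiset.mem_add.2 (Or.inl hC)⟩

theorem RORDeriv.mono (h : RORDeriv S C) (hle : S ≤ T) : RORDeriv T C := by
  simpa [add_tsub_cancel_of_le hle] using h.add_right (T - S)

theorem RORDeriv.trans (h : RORDeriv S C) (h' : RORDeriv (C ::ₘ U) D) :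
    RORDeriv (S + U) D := by
  obtain ⟨T, hST, hC⟩ := h
  obtain ⟨T', hT', hD⟩ := h'
  have hmid : T + U = (C ::ₘ U) + T.erase C := by
    conv_lhs => rw [← Multiset.cons_erase hC]
    rw [Multiset.cons_add, Multiset.cons_add, add_comm]
  have hlift := RORStep.reflTransGen_add_right hT' (T.erase C)
  rw [← hmid] at hlift
  exact ⟨T' + T.erase C, (RORStep.reflTransGen_add_right hST U).trans hlift,
    Multiset.mem_add.2 (Or.inl hD)⟩

theorem RORDeriv.resolve {k : Lit V} (h1 : RORDeriv S C1) (h2 : RORDeriv T C2)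
    (hk1 : k ∈ C1) (hk2 : k.neg ∈ C2) : RORDeriv (S + T) (C1.erase k ∪ C2.erase k.neg) := by
  have hstep : RORDeriv (C1 ::ₘ C2 ::ₘ 0) (C1.erase k ∪ C2.erase k.neg) :=
    ⟨_, .single (RORStep.resolve hk1 hk2 0), Multiset.mem_cons_self _ _⟩
  have h1' := h1.trans hstep
  rw [add_comm, Multiset.cons_add, zero_add] at h1'
  rw [add_comm]
  exact h2.trans h1'

end ReadOnce

/-- The clause `{l.neg, k}` is the edge `l → k` of the implication graph. -/
def ImplWalk : Lit V → Lit V → List (Clause V) → Prop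
  | l, m, [] => l = m
  | l, m, c :: cs => ∃ k, c = {l.neg, k} ∧ ImplWalk k m cs

namespace ImplWalk

variable {l m : Lit V}

@[simp] theorem nil_iff : ImplWalk l m [] ↔ l = m := Iff.rfl

@[simp] theorem cons_iff {c : Clause V} {cs : List (Clause V)} :
    ImplWalk l m (c :: cs) ↔ ∃ k, c = {l.neg, k} ∧ ImplWalk k m cs := Iff.rfl

theorem append_iff {xs ys : List (Clause V)} :
    ImplWalk l m (xs ++ ys) ↔ ∃ k, ImplWalk l k xs ∧ ImplWalk k m ys := by
  induction xs generalizing l with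
  | nil => simp
  | cons c xs ih =>
    simp only [List.cons_append, cons_iff, ih]
    exact ⟨fun ⟨k, hc, j, hk, hj⟩ => ⟨j, ⟨k, hc, hk⟩, hj⟩,
      fun ⟨j, ⟨k, hc, hk⟩, hj⟩ => ⟨k, hc, j, hk, hj⟩⟩

theorem append {k : Lit V} {xs ys : List (Clause V)} (h1 : ImplWalk l k xs)
    (h2 : ImplWalk k m ys) : ImplWalk l m (xs ++ ys) :=
  append_iff.2 ⟨k, h1, h2⟩

theorem reverse {cs : List (Clause V)} (h : ImplWalk l m cs) :
    ImplWalk m.neg l.neg cs.reverse := by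
  induction cs generalizing l with
  | nil => simp_all
  | cons c cs ih =>
    obtain ⟨k, rfl, hk⟩ := h
    rw [List.reverse_cons]
    exact (ih hk).append (cons_iff.2 ⟨l.neg, by simp [Finset.pair_comm], rfl⟩)

theorem ne_nil {cs : List (Clause V)} (h : ImplWalk l l.neg cs) : cs ≠ [] := by
  rintro rfl
  exact l.neg_ne_self h.symm

theorem rorDeriv_unit {cs : List (Clause V)} (h : ImplWalk l m cs) :
    RORDeriv ({l} ::ₘ (cs : Multiset (Clause V))) {m} := by
  induction cs generalizing l with
  | nil => exact .of_mem (by simp [show l = m from h])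
  | cons c cs ih =>
    obtain ⟨k, rfl, hk⟩ := h
    by_cases hkl : k = l.neg
    · subst hkl
      refine (ih hk).mono ?_
      rw [Finset.pair_eq_singleton, ← Multiset.cons_coe]
      exact Multiset.le_cons_self _ _
    · have hres := RORDeriv.resolve (k := l) (.of_mem (Multiset.mem_singleton_self {l}))
        (.of_mem (Multiset.mem_singleton_self {l.neg, k})) (by simp) (by simp)
      rw [Finset.erase_singleton, Finset.erase_insert (by simpa [eq_comm] using hkl),
        Finset.empty_union] at hres
      simpa using hres.trans (ih hk)

theorem exists_rorDeriv_coe {cs : List (Clause V)} (h : ImplWalk l m cs) (hne : cs ≠ []) :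
    ∃ O ⊆ ({l.neg, m} : Clause V), O.Nonempty ∧ RORDeriv (cs : Multiset (Clause V)) O := by
  induction cs generalizing l with
  | nil => exact absurd rfl hne
  | cons c cs ih =>
    obtain ⟨k, rfl, hk⟩ := h
    rcases eq_or_ne cs [] with rfl | hcs
    · exact ⟨{l.neg, k}, by simp [show k = m from hk], by simp, .of_mem (by simp)⟩
    obtain ⟨O, hOsub, hOne, hO⟩ := ih hk hcs
    by_cases hkO : k.neg ∈ O
    · by_cases hkl : k = l.neg
      · exact ⟨{l.neg, k}, by simp [hkl], by simp, .of_mem (by simp)⟩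
      · refine ⟨_, ?_, ⟨l.neg, ?_⟩,
          RORDeriv.resolve (.of_mem (Multiset.mem_singleton_self {l.neg, k})) hO (by simp) hkO⟩
        · intro p hp
          have := @hOsub p
          grind
        · simp [Ne.symm hkl]
    · refine ⟨O, fun p hp => ?_, hOne, hO.mono (Multiset.le_cons_self _ _)⟩
      have := hOsub hp
      grind

end ImplWalk

theorem ImplWalk.exists_rorDeriv {S : Multiset (Clause V)} {l m : Lit V} (cs : List (Clause V))
    (h : ImplWalk l m cs) (hne : cs ≠ []) (hS : ∀ C ∈ cs, C ∈ S) :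
    ∃ O ⊆ ({l.neg, m} : Clause V), O.Nonempty ∧ RORDeriv S O := by
  by_cases hcs : cs.Nodup
  · obtain ⟨O, hsub, hOne, hO⟩ := h.exists_rorDeriv_coe hne
    exact ⟨O, hsub, hOne, hO.mono ((Multiset.le_iff_subset (Multiset.coe_nodup.2 hcs)).2 hS)⟩
  obtain ⟨A, B, C, c, rfl, hnd⟩ := List.exists_eq_append_dup_of_not_nodup hcs
  obtain ⟨w, hAB, v', hc', hC⟩ := ImplWalk.append_iff.1 h
  obtain ⟨u, hA, v, hc, hB⟩ := ImplWalk.append_iff.1 hAB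
  by_cases hvv : v' = v
  · subst hvv
    have : (A ++ c :: C).length < (A ++ c :: B ++ c :: C).length := by simp
    exact ImplWalk.exists_rorDeriv (A ++ c :: C) (hA.append (ImplWalk.cons_iff.2 ⟨v', hc, hC⟩))
      (by simp) (fun D hD => hS D (by grind))
  · -- `c` is traversed first as `u → v`, then as `¬v → ¬u`.
    have hv' : v' = u.neg := by
      have : v' ∈ c := by simp [hc']
      simpa [hc, hvv] using this
    have hw : w = v.neg := by
      have : v ∈ c := by simp [hc]
      grind [Lit.neg_neg]
    subst hv' hw
    obtain ⟨O, hOsub, hOne, hO⟩ := hB.exists_rorDeriv_coe hB.ne_nil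
    rw [Finset.pair_eq_singleton, hOne.subset_singleton_iff] at hOsub
    subst hOsub
    have hu := RORDeriv.resolve (k := v) (.of_mem (Multiset.mem_singleton_self c)) hO
      (by simp [hc]) (by simp)
    have hres : c.erase v ∪ ({v.neg} : Clause V).erase v.neg = {u.neg} := by
      simp [hc, Finset.erase_insert_of_ne hvv]
    rw [hres] at hu
    refine ⟨{l.neg}, by simp, by simp, (hu.trans hA.reverse.rorDeriv_unit).mono ?_⟩
    have hperm : {c} + (B : Multiset (Clause V)) + (A.reverse : Multiset (Clause V)) =
        (A ++ c :: B : List (Clause V)) := by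
      simp only [Multiset.coe_reverse, ← Multiset.coe_add, ← Multiset.cons_coe,
        ← Multiset.singleton_add]
      abel
    rw [hperm, Multiset.le_iff_subset (Multiset.coe_nodup.2 hnd)]
    exact fun D hD => hS D (List.mem_append_left _ (Multiset.mem_coe.1 hD))
termination_by cs.length

def ImplReach (Φ : CNF V) (l m : Lit V) : Prop :=
  ∃ cs : List (Clause V), (∀ C ∈ cs, C ∈ Φ) ∧ ImplWalk l m cs

namespace ImplReach

variable {Φ : CNF V} {l k m : Lit V}

theorem of_mem (h : {l.neg, m} ∈ Φ) : ImplReach Φ l m :=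
  ⟨[{l.neg, m}], by simpa using h, ⟨m, rfl, rfl⟩⟩

theorem trans (h1 : ImplReach Φ l k) (h2 : ImplReach Φ k m) : ImplReach Φ l m := by
  obtain ⟨xs, hxs, hx⟩ := h1
  obtain ⟨ys, hys, hy⟩ := h2
  exact ⟨xs ++ ys, by simpa using fun C hC => hC.elim (hxs C) (hys C), hx.append hy⟩

theorem neg (h : ImplReach Φ l m) : ImplReach Φ m.neg l.neg := by
  obtain ⟨cs, hcs, hw⟩ := h
  exact ⟨cs.reverse, by simpa using hcs, hw.reverse⟩

end ImplReach

def ImplEntails (Φ : CNF V) (C : Clause V) : Prop :=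
  ∀ l m : Lit V, C = {l, m} → ImplReach Φ l.neg m

theorem implEntails_pair {Φ : CNF V} {a b : Lit V} (h : ImplReach Φ a.neg b) :
    ImplEntails Φ {a, b} := by
  intro l m hlm
  have h' := h.neg
  rw [Lit.neg_neg] at h'
  have hl : l ∈ ({a, b} : Clause V) := by simp [hlm]
  have hm : m ∈ ({a, b} : Clause V) := by simp [hlm]
  have ha : a ∈ ({l, m} : Clause V) := by simp [← hlm]
  have hb : b ∈ ({l, m} : Clause V) := by simp [← hlm]
  simp only [Finset.mem_insert, Finset.mem_singleton] at hl hm ha hb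
  rcases hl with rfl | rfl <;> rcases hm with rfl | rfl <;> grind

theorem IsResolvent.implEntails {Φ : CNF V} {C1 C2 R : Clause V} {x : V}
    (h : IsResolvent C1 C2 R x) (h1 : C1.card ≤ 2) (h2 : C2.card ≤ 2)
    (e1 : ImplEntails Φ C1) (e2 : ImplEntails Φ C2) : ImplEntails Φ R := by
  obtain ⟨hx1, hx2, rfl⟩ := h
  obtain ⟨a, rfl⟩ := Finset.exists_eq_pair_of_card_le_two h1 hx1
  obtain ⟨b, rfl⟩ := Finset.exists_eq_pair_of_card_le_two h2 hx2
  have hax : ImplReach Φ a.neg (x, true) := e1 _ _ rfl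
  have hxa : ImplReach Φ (x, false) a := e1 _ _ (Finset.pair_comm _ _)
  have hbx : ImplReach Φ b.neg (x, false) := e2 _ _ rfl
  have hxb : ImplReach Φ (x, true) b := e2 _ _ (Finset.pair_comm _ _)
  by_cases ha : a = (x, true) <;> by_cases hb : b = (x, false)
  · exact fun l m hlm => absurd hlm.symm (by simp [ha, hb])
  · subst ha
    simpa [Finset.erase_insert_of_ne hb] using implEntails_pair (hbx.trans (hxa.trans hxb))
  · subst hb
    simpa [Finset.erase_insert_of_ne ha] using implEntails_pair (hax.trans (hxb.trans hxa))
  · simpa [Finset.erase_insert_of_ne ha, Finset.erase_insert_of_ne hb] using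
      implEntails_pair (hax.trans hxb)

theorem Derives.card_le_two_and_implEntails {Φ : CNF V} (hΦ : Φ.is2CNF) {C : Clause V}
    (h : Derives Φ C) : C.card ≤ 2 ∧ ImplEntails Φ C := by
  induction h with
  | ax C hC => exact ⟨hΦ C hC, fun l m hlm => .of_mem (by simpa [← hlm] using hC)⟩
  | res C1 C2 R x _ _ hres ih1 ih2 =>
    exact ⟨by have := hres.card_add_two_le; omega,
      hres.implEntails ih1.1 ih2.1 ih1.2 ih2.2⟩

end ReadOnceResolution2CNF

/-- If the unit clause `(x_i)` can be derived from a 2CNF formula `Φ`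
by resolution, then it can be derived by a read-once resolution derivation. -/
theorem stmt14 {V : Type} [DecidableEq V] (Φ : CNF V) (h2 : CNF.is2CNF Φ) (xi : V)
    (h : Derives Φ ({(xi, true)} : Clause V)) :
    RORDeriv Φ.val ({(xi, true)} : Clause V) := by
  obtain ⟨cs, hcs, hw⟩ := (h.card_le_two_and_implEntails h2).2 (xi, true) (xi, true)
    (Finset.pair_eq_singleton _).symm
  obtain ⟨O, hOsub, hOne, hO⟩ := hw.exists_rorDeriv cs (by simpa using hw.ne_nil) hcs
  rw [Lit.neg_neg, Finset.pair_eq_singleton, hOne.subset_singleton_iff] at hOsub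
  exact hOsub ▸ hO
end
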